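/- The map S \mapsto \widetilde{C} = { (x, wt(x) mod 2) : x \in S } is a bijection between q-isotropic subspaces of \mathbb{F}_2^n and all-even self-orthogonal linear codes in \mathbb{F}_2^{n+1}, with inverse given by puncturing the last coordinate. -/

import Mathlib

/-! Over `𝔽₂` the weight parity of `x` is `∑ i, x i`, so `extend` is linear and `q x y` is the
dot product of `extend x` and `extend y`. Conversely a vector of even weight is determined by its
first `n` coordinates, so puncturing the last coordinate inverts `extend` on all-even codes. -/

noncomputable def q {n : ℕ} (x y : Fin n → ZMod 2) : ZMod 2 :=
  (∑ i, x i * y i) + (hammingNorm x : ZMod 2) * (hammingNorm y : ZMod 2)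

noncomputable def extend {n : ℕ} (x : Fin n → ZMod 2) : Fin (n + 1) → ZMod 2 :=
  Fin.snoc x (hammingNorm x : ZMod 2)

theorem ZMod.natCast_hammingNorm {ι : Type*} [Fintype ι] (x : ι → ZMod 2) :
    (hammingNorm x : ZMod 2) = ∑ i, x i := by
  have hx : ∀ i, x i ≠ 0 → x i = 1 := by
    intro i; generalize x i = a; revert a; decide
  rw [hammingNorm, Finset.card_eq_sum_ones, Nat.cast_sum, Nat.cast_one,
    ← Finset.sum_filter_ne_zero (s := Finset.univ)]
  exact Finset.sum_congr rfl fun i hi => (hx i (Finset.mem_filter.mp hi).2).symm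

theorem ZMod.even_hammingNorm_iff {ι : Type*} [Fintype ι] (x : ι → ZMod 2) :
    Even (hammingNorm x) ↔ ∑ i, x i = 0 := by
  rw [← ZMod.natCast_eq_zero_iff_even, ZMod.natCast_hammingNorm]

theorem Fin.snoc_dotProduct_snoc {R : Type*} [CommSemiring R] {n : ℕ} (x y : Fin n → R)
    (a b : R) :
    (Fin.snoc x a : Fin (n + 1) → R) ⬝ᵥ Fin.snoc y b = x ⬝ᵥ y + a * b := by
  simp [dotProduct, Fin.sum_univ_castSucc]

section

variable {n : ℕ}

theorem extend_eq_snoc_sum (x : Fin n → ZMod 2) : extend x = Fin.snoc x (∑ i, x i) := by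
  rw [extend, ZMod.natCast_hammingNorm]

theorem init_extend (x : Fin n → ZMod 2) : Fin.init (extend x) = x :=
  Fin.init_snoc _ _

theorem even_hammingNorm_extend (x : Fin n → ZMod 2) : Even (hammingNorm (extend x)) := by
  rw [ZMod.even_hammingNorm_iff, extend_eq_snoc_sum, Fin.sum_univ_castSucc]
  simp only [Fin.snoc_castSucc, Fin.snoc_last, CharTwo.add_self_eq_zero]

theorem extend_dotProduct_extend (x y : Fin n → ZMod 2) : extend x ⬝ᵥ extend y = q x y :=
  Fin.snoc_dotProduct_snoc _ _ _ _

theorem extend_init_of_even {c : Fin (n + 1) → ZMod 2} (hc : Even (hammingNorm c)) :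
    extend (Fin.init c) = c := by
  rw [ZMod.even_hammingNorm_iff, Fin.sum_univ_castSucc, CharTwo.add_eq_zero] at hc
  rw [extend_eq_snoc_sum, ← Fin.snoc_init_self c]
  simp [Fin.init, hc]

variable (n) in
noncomputable def extendₗ : (Fin n → ZMod 2) →ₗ[ZMod 2] (Fin (n + 1) → ZMod 2) where
  toFun := extend
  map_add' x y := by
    ext i
    refine Fin.lastCases ?_ (fun j => ?_) i <;>
      simp [extend_eq_snoc_sum, Finset.sum_add_distrib]
  map_smul' c x := by
    ext i
    refine Fin.lastCases ?_ (fun j => ?_) i <;>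
      simp [extend_eq_snoc_sum, Finset.mul_sum]

variable (n) in
def initₗ : (Fin (n + 1) → ZMod 2) →ₗ[ZMod 2] (Fin n → ZMod 2) :=
  LinearMap.funLeft (ZMod 2) (ZMod 2) Fin.castSucc

@[simp] theorem coe_initₗ : ⇑(initₗ n) = Fin.init := rfl

theorem even_hammingNorm_of_mem_map_extendₗ (S : Submodule (ZMod 2) (Fin n → ZMod 2)) :
    ∀ c ∈ S.map (extendₗ n), Even (hammingNorm c) := by
  rintro _ ⟨x, -, rfl⟩
  exact even_hammingNorm_extend x

theorem dotProduct_eq_zero_of_mem_map_extendₗ {S : Submodule (ZMod 2) (Fin n → ZMod 2)}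
    (hS : ∀ x ∈ S, ∀ y ∈ S, q x y = 0) :
    ∀ c ∈ S.map (extendₗ n), ∀ c' ∈ S.map (extendₗ n), c ⬝ᵥ c' = 0 := by
  rintro _ ⟨x, hx, rfl⟩ _ ⟨y, hy, rfl⟩
  exact (extend_dotProduct_extend x y).trans (hS x hx y hy)

theorem q_eq_zero_of_mem_map_initₗ {C : Submodule (ZMod 2) (Fin (n + 1) → ZMod 2)}
    (hCeven : ∀ c ∈ C, Even (hammingNorm c)) (hCorth : ∀ c ∈ C, ∀ c' ∈ C, c ⬝ᵥ c' = 0) :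
    ∀ x ∈ C.map (initₗ n), ∀ y ∈ C.map (initₗ n), q x y = 0 := by
  rintro _ ⟨c, hc, rfl⟩ _ ⟨c', hc', rfl⟩
  rw [coe_initₗ, ← extend_dotProduct_extend, extend_init_of_even (hCeven c hc),
    extend_init_of_even (hCeven c' hc')]
  exact hCorth c hc c' hc'

theorem map_initₗ_map_extendₗ (S : Submodule (ZMod 2) (Fin n → ZMod 2)) :
    (S.map (extendₗ n)).map (initₗ n) = S := by
  refine SetLike.coe_injective ?_
  rw [Submodule.map_coe, Submodule.map_coe, Set.image_image]
  exact Set.EqOn.image_eq_self fun x _ => init_extend x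

theorem map_extendₗ_map_initₗ {C : Submodule (ZMod 2) (Fin (n + 1) → ZMod 2)}
    (hC : ∀ c ∈ C, Even (hammingNorm c)) : (C.map (initₗ n)).map (extendₗ n) = C := by
  refine SetLike.coe_injective ?_
  rw [Submodule.map_coe, Submodule.map_coe, Set.image_image]
  exact Set.EqOn.image_eq_self fun c hc => extend_init_of_even (hC c hc)

end

theorem isotropic_self_orthogonal_bijection (n : ℕ) :
    ∃ f : {S : Submodule (ZMod 2) (Fin n → ZMod 2) //
            ∀ x ∈ S, ∀ y ∈ S, q x y = 0} ≃
          {C : Submodule (ZMod 2) (Fin (n + 1) → ZMod 2) //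
            (∀ c ∈ C, Even (hammingNorm c)) ∧
              ∀ c ∈ C, ∀ c' ∈ C, (∑ i, c i * c' i) = 0},
      (∀ S, ((f S).1 : Set (Fin (n + 1) → ZMod 2)) =
          extend '' ((S.1 : Set (Fin n → ZMod 2)))) ∧
      ∀ C, ((f.symm C).1 : Set (Fin n → ZMod 2)) =
          Fin.init '' ((C.1 : Set (Fin (n + 1) → ZMod 2))) :=
  ⟨{ toFun := fun S => ⟨S.1.map (extendₗ n), even_hammingNorm_of_mem_map_extendₗ S.1,
        dotProduct_eq_zero_of_mem_map_extendₗ S.2⟩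
     invFun := fun C => ⟨C.1.map (initₗ n), q_eq_zero_of_mem_map_initₗ C.2.1 C.2.2⟩
     left_inv := fun S => Subtype.ext (map_initₗ_map_extendₗ S.1)
     right_inv := fun C => Subtype.ext (map_extendₗ_map_initₗ C.2.1) },
    fun S => Submodule.map_coe _ S.1, fun C => Submodule.map_coe _ C.1⟩
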